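/- arXiv:1303.6712 — 4 statements merged into one kernel-verified Lean document; each statement's English description precedes it below -/
import Mathlib

section
/- Let G be a group fitting in a short exact sequence 0 → ℤ^d → G → ℤ → 0, with H ⊴ G the image of ℤ^d, z ∈ G mapping to a generator of ℤ, and A : H → H the automorphism given by conjugation by z (z·x·z⁻¹ = A(x) for x ∈ H). If A is hyperbolic (equivalently, A − I is injective on H ≅ ℤ^d, i.e., A has no eigenvalue equal to 1 in the sense that A(x) = x implies x = 0), then H equals the set of v ∈ G such that v^k ∈ [G,G] for some nonzero integer k. In particular H is a characteristic subgroup of G: every automorphism of G maps H onto H. -/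
/-!
If conjugation by `z` acts on `H ≅ ℤ^d` as `A` with no nonzero fixed vector, then `A - 1` is
injective, so `det (A - 1) • v = (A - 1) (adj (A - 1) v)` exhibits a nonzero multiple of every
`v ∈ H` as `A w - w`, i.e. as the commutator `⁅z, w⁆`. Conversely, `G ⧸ H ≅ ℤ` is abelian and
torsion free, so `v ^ k ∈ [G, G]` with `k ≠ 0` forces `v ∈ H`. Being described through the
characteristic subgroup `[G, G]` alone, `H` is characteristic.
-/

open scoped commutatorElement Matrix

theorem LinearMap.exists_smul_mem_range_of_injective {R n : Type*} [CommRing R] [IsDomain R]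
    [Fintype n] [DecidableEq n] {f : (n → R) →ₗ[R] (n → R)} (hf : Function.Injective f) :
    ∃ k : R, k ≠ 0 ∧ ∀ v, k • v ∈ LinearMap.range f := by
  set M := LinearMap.toMatrix' f
  refine ⟨M.det, fun hdet => ?_, fun v => ⟨M.adjugate *ᵥ v, ?_⟩⟩
  · obtain ⟨u, hu, hMu⟩ := Matrix.exists_mulVec_eq_zero_iff.2 hdet
    exact hu (hf (by rw [← f.toMatrix'_mulVec, hMu, map_zero]))
  · rw [← f.toMatrix'_mulVec, Matrix.mulVec_mulVec, Matrix.mul_adjugate, Matrix.smul_mulVec,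
      Matrix.one_mulVec]

theorem MonoidHom.exists_zpow_mem_range_of_injective {n : Type*} [Fintype n] [DecidableEq n]
    {f : Multiplicative (n → ℤ) →* Multiplicative (n → ℤ)} (hf : Function.Injective f) :
    ∃ k : ℤ, k ≠ 0 ∧ ∀ x, x ^ k ∈ f.range := by
  obtain ⟨k, hk, hrange⟩ :=
    LinearMap.exists_smul_mem_range_of_injective (f := f.toAdditive.toIntLinearMap) hf
  refine ⟨k, hk, fun x => ?_⟩
  obtain ⟨w, hw⟩ := hrange x.toAdd
  exact ⟨.ofAdd w, congrArg Multiplicative.ofAdd hw⟩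

section Group

variable {G : Type*} [Group G]

theorem MonoidHom.mem_ker_of_zpow_mem_commutator {M : Type*} [CommGroup M] [IsMulTorsionFree M]
    (π : G →* M) {v : G} {k : ℤ} (hk : k ≠ 0) (hv : v ^ k ∈ commutator G) : v ∈ π.ker := by
  rw [MonoidHom.mem_ker, ← IsMulTorsionFree.zpow_eq_one_iff_left hk, ← map_zpow]
  exact Abelianization.commutator_subset_ker π hv

theorem Subgroup.characteristic_of_forall_mem_iff_exists_zpow_mem {H K : Subgroup G}
    [K.Characteristic] (hH : ∀ v, v ∈ H ↔ ∃ k : ℤ, k ≠ 0 ∧ v ^ k ∈ K) : H.Characteristic := by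
  refine Subgroup.characteristic_iff_le_comap.2 fun φ v hv => ?_
  obtain ⟨k, hk, hvk⟩ := (hH v).1 hv
  refine (hH (φ v)).2 ⟨k, hk, ?_⟩
  rw [← map_zpow]
  exact (Subgroup.characteristic_iff_le_comap.1 ‹_› φ) hvk

theorem exists_zpow_eq_commutatorElement {n : Type*} [Fintype n] [DecidableEq n]
    (i : Multiplicative (n → ℤ) →* G) (hi : Function.Injective i) (z : G)
    (hconj : ∀ x, z * i x * z⁻¹ ∈ i.range) (hfix : ∀ x ∈ i.range, z * x * z⁻¹ = x → x = 1) :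
    ∃ k : ℤ, k ≠ 0 ∧ ∀ x, ∃ w, i x ^ k = ⁅z, i w⁆ := by
  obtain ⟨A, hA⟩ : ∃ A : Multiplicative (n → ℤ) →* Multiplicative (n → ℤ),
      ∀ x, i (A x) = z * i x * z⁻¹ :=
    ⟨(MonoidHom.ofInjective hi).symm.toMonoidHom.comp
      (((MulAut.conj z).toMonoidHom.comp i).codRestrict i.range hconj),
      fun x => MonoidHom.apply_ofInjective_symm hi _⟩
  have hinj : Function.Injective (A / MonoidHom.id (Multiplicative (n → ℤ))) := by
    refine (injective_iff_map_eq_one _).2 fun x hx => hi ?_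
    rw [map_one]
    exact hfix _ ⟨x, rfl⟩ (by rw [← hA, div_eq_one.1 hx, MonoidHom.id_apply])
  obtain ⟨k, hk, hrange⟩ := MonoidHom.exists_zpow_mem_range_of_injective hinj
  refine ⟨k, hk, fun x => ?_⟩
  obtain ⟨w, hw⟩ := hrange x
  refine ⟨w, ?_⟩
  rw [← map_zpow, ← hw, MonoidHom.div_apply, map_div, hA, MonoidHom.id_apply, commutatorElement_def,
    div_eq_mul_inv]

end Group

theorem image_of_Zd_is_radical_of_commutator_general
    {d : ℕ} {G : Type*} [Group G]
    (i : Multiplicative (Fin d → ℤ) →* G) (π : G →* Multiplicative ℤ)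
    (hi : Function.Injective i)
    (hexact : i.range = π.ker)
    (z : G)
    (hhyp : ∀ x ∈ i.range, z * x * z⁻¹ = x → x = 1) :
    (∀ v : G, v ∈ i.range ↔ ∃ k : ℤ, k ≠ 0 ∧ v ^ k ∈ commutator G) ∧
    (∀ φ : G ≃* G, i.range.map φ.toMonoidHom = i.range) := by
  have hnormal : i.range.Normal := hexact ▸ π.normal_ker
  obtain ⟨k, hk, hcomm⟩ := exists_zpow_eq_commutatorElement i hi z
    (fun x => hnormal.conj_mem _ ⟨x, rfl⟩ z) hhyp
  have hrad : ∀ v : G, v ∈ i.range ↔ ∃ k : ℤ, k ≠ 0 ∧ v ^ k ∈ commutator G := by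
    refine fun v => ⟨?_, fun ⟨m, hm, hvm⟩ => hexact ▸ π.mem_ker_of_zpow_mem_commutator hm hvm⟩
    rintro ⟨x, rfl⟩
    obtain ⟨w, hw⟩ := hcomm x
    exact ⟨k, hk, hw ▸ Subgroup.commutator_mem_commutator (Subgroup.mem_top _) (Subgroup.mem_top _)⟩
  have hchar : i.range.Characteristic :=
    Subgroup.characteristic_of_forall_mem_iff_exists_zpow_mem hrad
  exact ⟨hrad, Subgroup.characteristic_iff_map_eq.1 hchar⟩

/-- let `0 → ℤ^d → G → ℤ → 0` be exact, `H` the image of `ℤ^d`, `z ∈ G` mapping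
to a generator of `ℤ`, so that conjugation by `z` gives the automorphism `A` of `H`. If `A` is
hyperbolic in the sense that it has no nonzero fixed vector (`z x z⁻¹ = x → x = 1` on `H`),
then `H = { v ∈ G : v^k ∈ [G,G] for some k ≠ 0 }`; in particular `H` is characteristic. -/
theorem image_of_Zd_is_radical_of_commutator
    {d : ℕ} {G : Type*} [Group G]
    (i : Multiplicative (Fin d → ℤ) →* G) (π : G →* Multiplicative ℤ)
    (hi : Function.Injective i) (hπ : Function.Surjective π)
    (hexact : i.range = π.ker)
    (z : G) (hz : π z = Multiplicative.ofAdd 1)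
    (hhyp : ∀ x ∈ i.range, z * x * z⁻¹ = x → x = 1) :
    (∀ v : G, v ∈ i.range ↔ ∃ k : ℤ, k ≠ 0 ∧ v ^ k ∈ commutator G) ∧
    (∀ φ : G ≃* G, i.range.map φ.toMonoidHom = i.range) :=
  image_of_Zd_is_radical_of_commutator_general i π hi hexact z hhyp
end

section
/- Let G be a finitely generated group with a fixed finite generating set, and suppose the outer automorphism group Out(G) is finite. Let φ ∈ Aut(G), N ∈ ℕ, and let A₀ ⊆ G be finite. Define A_{k+1} = U_N(φ(A_k)), where U_N(A) denotes the N-neighborhood of A in the word metric. Then the diameters diam(A_k) (in the word metric) grow at most linearly in k; in particular, at most polynomially. -/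
/-!
Since `Out(G)` is finite, some power `φ ^ p` is conjugation by an element `g`, and conjugation
changes word distances by at most `2 |g⁻¹|`. Every point of `A (k + p)` lies within a fixed
distance `M` of `φ ^ p '' A k`, so `diam A (k + p) ≤ diam A k + 2 |g⁻¹| + 2 M`. The first `p`
terms have finite diameter because `φ` is Lipschitz for the word metric.
-/

variable {G : Type*} [Group G]

/-- Word length with respect to a finite generating set `S` (letters from `S ∪ S⁻¹`). -/
noncomputable def wordLength (S : Finset G) (g : G) : ℕ :=
  sInf {n | ∃ l : List G, (∀ x ∈ l, x ∈ S ∨ x⁻¹ ∈ S) ∧ l.length = n ∧ l.prod = g}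

/-- The left-invariant word metric `d(x,y) = |x⁻¹ y|`. -/
noncomputable def wordDist (S : Finset G) (x y : G) : ℕ := wordLength S (x⁻¹ * y)

/-- The `N`-neighborhood of a set in the word metric. -/
noncomputable def wordNbhd (S : Finset G) (N : ℕ) (A : Set G) : Set G :=
  {g | ∃ a ∈ A, wordDist S a g ≤ N}

open Function

section WordLength

variable (S : Finset G)

lemma wordLength_prod_le_length {l : List G} (hl : ∀ x ∈ l, x ∈ S ∨ x⁻¹ ∈ S) :
    wordLength S l.prod ≤ l.length :=
  Nat.sInf_le ⟨l, hl, rfl, rfl⟩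

lemma wordLength_one : wordLength S (1 : G) = 0 :=
  Nat.le_zero.mp (wordLength_prod_le_length S (l := []) (by simp))

variable {S} (hS : Subgroup.closure (S : Set G) = ⊤)
include hS

lemma exists_word_of_closure_eq_top (g : G) :
    ∃ l : List G, (∀ x ∈ l, x ∈ S ∨ x⁻¹ ∈ S) ∧ l.prod = g := by
  have hg : g ∈ Submonoid.closure ((S : Set G) ∪ (S : Set G)⁻¹) := by
    rw [← Subgroup.closure_toSubmonoid, hS]; trivial
  simpa using Submonoid.exists_list_of_mem_closure hg

lemma exists_word_length_eq_wordLength (g : G) :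
    ∃ l : List G, (∀ x ∈ l, x ∈ S ∨ x⁻¹ ∈ S) ∧ l.length = wordLength S g ∧
      l.prod = g := by
  obtain ⟨l, hl, rfl⟩ := exists_word_of_closure_eq_top hS g
  have hne : Set.Nonempty
      {n | ∃ w : List G, (∀ x ∈ w, x ∈ S ∨ x⁻¹ ∈ S) ∧ w.length = n ∧ w.prod = l.prod} :=
    ⟨l.length, l, hl, rfl, rfl⟩
  exact Nat.sInf_mem hne

lemma wordLength_mul_le (g h : G) :
    wordLength S (g * h) ≤ wordLength S g + wordLength S h := by
  obtain ⟨l₁, hl₁, len₁, rfl⟩ := exists_word_length_eq_wordLength hS g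
  obtain ⟨l₂, hl₂, len₂, rfl⟩ := exists_word_length_eq_wordLength hS h
  rw [← len₁, ← len₂, ← List.length_append, ← List.prod_append]
  exact wordLength_prod_le_length S fun x hx => (List.mem_append.mp hx).elim (hl₁ x) (hl₂ x)

lemma wordLength_inv_le (g : G) : wordLength S g⁻¹ ≤ wordLength S g := by
  obtain ⟨l, hl, len, rfl⟩ := exists_word_length_eq_wordLength hS g
  rw [List.prod_inv_reverse, ← len]
  refine (wordLength_prod_le_length S fun x hx => ?_).trans_eq (by simp)
  simp only [List.mem_reverse, List.mem_map] at hx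
  obtain ⟨y, hy, rfl⟩ := hx
  simpa [or_comm] using hl y hy

lemma wordLength_inv (g : G) : wordLength S g⁻¹ = wordLength S g :=
  (wordLength_inv_le hS g).antisymm (by simpa using wordLength_inv_le hS g⁻¹)

end WordLength

section WordDist

variable {S : Finset G}

lemma wordDist_self (x : G) : wordDist S x x = 0 := by
  simp [wordDist, wordLength_one]

lemma wordDist_mul_left (g x y : G) : wordDist S (g * x) (g * y) = wordDist S x y := by
  simp [wordDist, mul_assoc]

variable (hS : Subgroup.closure (S : Set G) = ⊤)
include hS

lemma wordDist_comm (x y : G) : wordDist S x y = wordDist S y x := by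
  rw [wordDist, wordDist, ← wordLength_inv hS, mul_inv_rev, inv_inv]

lemma wordDist_triangle (x y z : G) : wordDist S x z ≤ wordDist S x y + wordDist S y z := by
  simpa [wordDist, mul_assoc] using wordLength_mul_le hS (x⁻¹ * y) (y⁻¹ * z)

lemma wordDist_mul_right_le (g x y : G) :
    wordDist S (x * g) (y * g) ≤ wordDist S x y + 2 * wordLength S g := by
  have h₁ := wordLength_mul_le hS g⁻¹ (x⁻¹ * y * g)
  have h₂ := wordLength_mul_le hS (x⁻¹ * y) g
  rw [wordLength_inv hS] at h₁
  simp only [wordDist, mul_inv_rev, mul_assoc] at h₁ h₂ ⊢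
  omega

lemma wordDist_conj_le (g x y : G) :
    wordDist S (MulAut.conj g x) (MulAut.conj g y) ≤
      wordDist S x y + 2 * wordLength S g⁻¹ := by
  simpa only [MulAut.conj_apply, wordDist_mul_left] using
    wordDist_mul_right_le hS g⁻¹ (g * x) (g * y)

lemma exists_wordDist_map_le {H F : Type*} [Group H] [FunLike F G H] [MonoidHomClass F G H]
    {T : Finset H} (hT : Subgroup.closure (T : Set H) = ⊤) (f : F) :
    ∃ L : ℕ, ∀ x y, wordDist T (f x) (f y) ≤ L * wordDist S x y := by
  set L := S.sup fun s => wordLength T (f s)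
  have hletter : ∀ x, x ∈ S ∨ x⁻¹ ∈ S → wordLength T (f x) ≤ L := by
    rintro x (hx | hx)
    · exact Finset.le_sup (f := fun s => wordLength T (f s)) hx
    · rw [← wordLength_inv hT, ← map_inv]
      exact Finset.le_sup (f := fun s => wordLength T (f s)) hx
  have hword : ∀ l : List G, (∀ x ∈ l, x ∈ S ∨ x⁻¹ ∈ S) →
      wordLength T (f l.prod) ≤ L * l.length := by
    intro l hl
    induction l with
    | nil => simp [wordLength_one]
    | cons a l ih =>
      rw [List.prod_cons, map_mul, List.length_cons, mul_add_one]
      have := hletter a (hl a List.mem_cons_self)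
      have := ih fun x hx => hl x (List.mem_cons_of_mem a hx)
      have := wordLength_mul_le hT (f a) (f l.prod)
      omega
  refine ⟨L, fun x y => ?_⟩
  obtain ⟨l, hl, len, hprod⟩ := exists_word_length_eq_wordLength hS (x⁻¹ * y)
  rw [wordDist, wordDist, ← map_inv, ← map_mul, ← len, ← hprod]
  exact hword l hl

end WordDist

lemma MulAut.coe_pow (φ : MulAut G) (n : ℕ) : ⇑(φ ^ n) = (⇑φ)^[n] :=
  hom_coe_pow _ rfl (fun _ _ => rfl) φ n

lemma exists_linear_bound_of_periodic_step {P : ℕ → ℕ → Prop} {p c : ℕ} (hp : 0 < p)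
    (hmono : ∀ k B B', P k B → B ≤ B' → P k B') (hbdd : ∀ k, ∃ B, P k B)
    (hstep : ∀ k B, P k B → P (k + p) (B + c)) :
    ∃ C, ∀ k, P k (C * (k + 1)) := by
  choose b hb using hbdd
  set B₀ := (Finset.range p).sup b
  have hlin : ∀ k, P k (B₀ + c * k) := by
    intro k
    induction k using Nat.strong_induction_on with
    | _ k ih =>
      by_cases hk : k < p
      · exact hmono k _ _ (hb k) ((Finset.le_sup (Finset.mem_range.mpr hk)).trans le_self_add)
      · have hsplit : k - p + p = k := Nat.sub_add_cancel (not_lt.mp hk)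
        have hrec := hstep _ _ (ih (k - p) (by omega))
        rw [hsplit] at hrec
        refine hmono k _ _ hrec ?_
        have : c * (k - p) + c ≤ c * k := by
          rw [← mul_add_one]; exact Nat.mul_le_mul_left c (by omega)
        omega
  refine ⟨B₀ + c, fun k => hmono k _ _ (hlin k) ?_⟩
  nlinarith

section Diameter

variable {S : Finset G}

lemma mem_wordNbhd_image {f : G → G} {N : ℕ} {A : Set G} {z : G} :
    z ∈ wordNbhd S N (f '' A) ↔ ∃ a ∈ A, wordDist S (f a) z ≤ N := by
  simp [wordNbhd]

def WordDiamLE (S : Finset G) (A : Set G) (B : ℕ) : Prop :=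
  ∀ x ∈ A, ∀ y ∈ A, wordDist S x y ≤ B

lemma WordDiamLE.mono {A : Set G} {B B' : ℕ} (h : WordDiamLE S A B) (hB : B ≤ B') :
    WordDiamLE S A B' :=
  fun x hx y hy => (h x hx y hy).trans hB

lemma Set.Finite.exists_wordDiamLE {A : Set G} (hA : A.Finite) : ∃ B, WordDiamLE S A B := by
  obtain ⟨B, hB⟩ := ((hA.prod hA).image fun q => wordDist S q.1 q.2).bddAbove
  exact ⟨B, fun x hx y hy => hB ⟨(x, y), ⟨hx, hy⟩, rfl⟩⟩

variable (hS : Subgroup.closure (S : Set G) = ⊤)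
include hS

lemma WordDiamLE.of_subset_wordNbhd_image {ψ : G → G} {L c M B : ℕ} {A A' : Set G}
    (hψ : ∀ x y, wordDist S (ψ x) (ψ y) ≤ L * wordDist S x y + c)
    (hA : WordDiamLE S A B) (hA' : A' ⊆ wordNbhd S M (ψ '' A)) :
    WordDiamLE S A' (L * B + c + 2 * M) := by
  intro x hx y hy
  obtain ⟨a, ha, hxa⟩ := mem_wordNbhd_image.mp (hA' hx)
  obtain ⟨b, hb, hyb⟩ := mem_wordNbhd_image.mp (hA' hy)
  rw [wordDist_comm hS] at hxa
  have hab : L * wordDist S a b ≤ L * B := Nat.mul_le_mul_left L (hA a ha b hb)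
  calc wordDist S x y ≤ wordDist S x (ψ a) + wordDist S (ψ a) y := wordDist_triangle hS _ _ _
    _ ≤ wordDist S x (ψ a) + (wordDist S (ψ a) (ψ b) + wordDist S (ψ b) y) := by
        gcongr; exact wordDist_triangle hS _ _ _
    _ ≤ M + ((L * wordDist S a b + c) + M) := by gcongr; exact hψ a b
    _ ≤ L * B + c + 2 * M := by omega

lemma exists_subset_wordNbhd_iterate_image {f : G → G} {L N : ℕ}
    (hf : ∀ x y, wordDist S (f x) (f y) ≤ L * wordDist S x y) {A : ℕ → Set G}
    (hA : ∀ k, A (k + 1) ⊆ wordNbhd S N (f '' A k)) (j : ℕ) :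
    ∃ M, ∀ k, A (k + j) ⊆ wordNbhd S M (f^[j] '' A k) := by
  induction j with
  | zero => exact ⟨0, fun k z hz => mem_wordNbhd_image.mpr ⟨z, hz, by simp [wordDist_self]⟩⟩
  | succ j ih =>
    obtain ⟨M, hM⟩ := ih
    refine ⟨L * M + N, fun k z hz => mem_wordNbhd_image.mpr ?_⟩
    obtain ⟨w, hw, hwz⟩ := mem_wordNbhd_image.mp (hA (k + j) hz)
    obtain ⟨a, ha, haw⟩ := mem_wordNbhd_image.mp (hM k hw)
    refine ⟨a, ha, ?_⟩
    calc wordDist S (f^[j + 1] a) z ≤ wordDist S (f (f^[j] a)) (f w) + wordDist S (f w) z := by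
          rw [iterate_succ_apply']; exact wordDist_triangle hS _ _ _
      _ ≤ L * M + N := add_le_add ((hf _ _).trans (Nat.mul_le_mul_left L haw)) hwz

end Diameter

/-- if `Out(G)` is finite, then for any automorphism `φ`, any `N`, and any finite
`A₀ ⊆ G`, the sequence `A_{k+1} = U_N(φ(A_k))` has word-metric diameter growing at most
linearly (hence polynomially) in `k`. -/
theorem diameter_linear_growth_of_finite_out
    (S : Finset G) (hS : Subgroup.closure (S : Set G) = ⊤)
    (hOut : Finite (MulAut G ⧸ (MulAut.conj : G →* MulAut G).range))
    (φ : G ≃* G) (N : ℕ) (A : ℕ → Set G) (hA0 : (A 0).Finite)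
    (hAseq : ∀ k, A (k + 1) = wordNbhd S N (φ '' A k)) :
    ∃ C : ℕ, ∀ k, ∀ x ∈ A k, ∀ y ∈ A k, wordDist S x y ≤ C * (k + 1) := by
  obtain ⟨L, hL⟩ := exists_wordDist_map_le hS hS φ
  have hφ : ∀ x y, wordDist S (φ x) (φ y) ≤ L * wordDist S x y + 0 := hL
  have hnbhd : ∀ k, A (k + 1) ⊆ wordNbhd S N (φ '' A k) := fun k => (hAseq k).le
  obtain ⟨p, hp, -, g, hg⟩ :=
    Subgroup.exists_pow_mem_of_index_ne_zero (Subgroup.index_ne_zero_of_finite (hH := hOut))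
      (φ : MulAut G)
  have hconj : ∀ x y, wordDist S ((⇑φ)^[p] x) ((⇑φ)^[p] y) ≤
      1 * wordDist S x y + 2 * wordLength S g⁻¹ := by
    intro x y
    rw [← MulAut.coe_pow, ← hg, one_mul]
    exact wordDist_conj_le hS g x y
  obtain ⟨M, hM⟩ := exists_subset_wordNbhd_iterate_image hS hL hnbhd p
  refine exists_linear_bound_of_periodic_step (P := fun k B => WordDiamLE S (A k) B)
    (c := 2 * wordLength S g⁻¹ + 2 * M) hp
    (fun k B B' h hB => h.mono hB) (fun k => ?_) (fun k B hB => ?_)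
  · induction k with
    | zero => exact hA0.exists_wordDiamLE
    | succ k ih =>
      obtain ⟨B, hB⟩ := ih
      exact ⟨_, hB.of_subset_wordNbhd_image hS hφ (hnbhd k)⟩
  · exact (hB.of_subset_wordNbhd_image hS hconj (hM k)).mono (by omega)
end

section
/- Let G be a finitely generated group acting freely, properly discontinuously, cocompactly by isometries on a proper geodesic metric space M̃ (e.g. G = π₁(M) acting on the universal cover of a compact Riemannian manifold M). Suppose that for every automorphism φ of G, every N > 0, and every finite A₀ ⊆ G, the sequence A_{k+1} = U_N(φ(A_k)) has word-metric diameter growing at most polynomially in k. Then for every homeomorphism f : M → M with lift f̃ : M̃ → M̃ and every bounded set K ⊆ M̃, the diameter of f̃ⁿ(K) grows at most polynomially as n → ∞. -/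
variable {G : Type*} [Group G]

/-! The orbit map `g ↦ g • x₀` is Lipschitz from the word metric, so it suffices to cover
`f̃ⁿ(K)` by translates `Aₙ • K₀` of the compact set `K₀` with `Aₙ` of polynomially growing word
diameter. By proper discontinuity only finitely many translates of `K₀` meet `f̃(K₀)`; if `N`
bounds their word lengths, equivariance gives `f̃(A • K₀) ⊆ U_N(φ(A)) • K₀`, so the sets `Aₙ` can
be taken to be the sequence of the hypothesis. -/

open Pointwise

section WordLength

variable {S : Finset G}

theorem exists_list_prod_eq_of_closure_eq_top (hS : Subgroup.closure (S : Set G) = ⊤) (g : G) :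
    ∃ l : List G, (∀ x ∈ l, x ∈ S ∨ x⁻¹ ∈ S) ∧ l.prod = g := by
  have hg : g ∈ (Subgroup.closure (S : Set G)).toSubmonoid := hS ▸ Subgroup.mem_top g
  rw [Subgroup.closure_toSubmonoid] at hg
  simpa using Submonoid.exists_list_of_mem_closure hg

theorem exists_list_length_eq_wordLength (hS : Subgroup.closure (S : Set G) = ⊤) (g : G) :
    ∃ l : List G, (∀ x ∈ l, x ∈ S ∨ x⁻¹ ∈ S) ∧ l.length = wordLength S g ∧ l.prod = g := by
  obtain ⟨l, hl, rfl⟩ := exists_list_prod_eq_of_closure_eq_top hS g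
  exact Nat.sInf_mem (s := {n | ∃ l' : List G, (∀ x ∈ l', x ∈ S ∨ x⁻¹ ∈ S) ∧ l'.length = n ∧
    l'.prod = l.prod}) ⟨_, l, hl, rfl, rfl⟩

theorem wordDist_mul_right (S : Finset G) (a b : G) : wordDist S a (a * b) = wordLength S b := by
  simp [wordDist]

end WordLength

section OrbitMap

variable {X : Type*} [PseudoMetricSpace X] [MulAction G X] [IsIsometricSMul G X]

theorem dist_list_prod_smul_le {T : Set G} {L : ℝ} (x : X) (hT : ∀ a ∈ T, dist x (a • x) ≤ L)
    (l : List G) (hl : ∀ a ∈ l, a ∈ T) : dist x (l.prod • x) ≤ L * l.length := by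
  induction l with
  | nil => simp
  | cons a l ih =>
    calc dist x ((a :: l).prod • x) ≤ dist x (a • x) + dist (a • x) (a • l.prod • x) := by
          rw [List.prod_cons, mul_smul]; exact dist_triangle _ _ _
      _ = dist x (a • x) + dist x (l.prod • x) := by rw [dist_smul]
      _ ≤ L + L * l.length :=
          add_le_add (hT a (hl a List.mem_cons_self)) (ih fun b hb => hl b (List.mem_cons_of_mem a hb))
      _ = L * (a :: l).length := by push_cast [List.length_cons]; ring

variable {S : Finset G}

theorem dist_smul_le_mul_wordLength (hS : Subgroup.closure (S : Set G) = ⊤) (x : X) (g : G) :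
    dist x (g • x) ≤ (∑ s ∈ S, dist x (s • x)) * wordLength S g := by
  have hS_le : ∀ s ∈ S, dist x (s • x) ≤ ∑ s ∈ S, dist x (s • x) := fun s hs =>
    Finset.single_le_sum (f := fun s => dist x (s • x)) (fun _ _ => dist_nonneg) hs
  obtain ⟨l, hl, hlen, rfl⟩ := exists_list_length_eq_wordLength hS g
  rw [← hlen]
  refine dist_list_prod_smul_le x ?_ l hl
  rintro a (ha | ha)
  · exact hS_le a ha
  · calc dist x (a • x) = dist x (a⁻¹ • x) := by
          rw [← dist_smul a⁻¹, inv_smul_smul, dist_comm]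
      _ ≤ _ := hS_le _ ha

theorem dist_smul_smul_le_mul_wordDist (hS : Subgroup.closure (S : Set G) = ⊤) (x : X) (g h : G) :
    dist (g • x) (h • x) ≤ (∑ s ∈ S, dist x (s • x)) * wordDist S g h := by
  calc dist (g • x) (h • x) = dist x ((g⁻¹ * h) • x) := by
        rw [← dist_smul g⁻¹, inv_smul_smul, mul_smul]
    _ ≤ _ := dist_smul_le_mul_wordLength hS x _

theorem dist_le_of_mem_smul_of_wordDist_le (hS : Subgroup.closure (S : Set G) = ⊤) {K₀ : Set X}
    (hK₀ : Bornology.IsBounded K₀) {x₀ : X} (hx₀ : x₀ ∈ K₀) {A : Set G} {D : ℕ}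
    (hA : ∀ a ∈ A, ∀ b ∈ A, wordDist S a b ≤ D) {y z : X} (hy : y ∈ A • K₀) (hz : z ∈ A • K₀) :
    dist y z ≤ 2 * Metric.diam K₀ + (∑ s ∈ S, dist x₀ (s • x₀)) * D := by
  obtain ⟨a, ha, k, hk, rfl⟩ := hy
  obtain ⟨b, hb, k', hk', rfl⟩ := hz
  have hL : 0 ≤ ∑ s ∈ S, dist x₀ (s • x₀) := Finset.sum_nonneg fun _ _ => dist_nonneg
  calc dist (a • k) (b • k')
      ≤ dist (a • k) (a • x₀) + dist (a • x₀) (b • x₀) + dist (b • x₀) (b • k') :=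
        dist_triangle4 _ _ _ _
    _ = dist k x₀ + dist (a • x₀) (b • x₀) + dist x₀ k' := by rw [dist_smul, dist_smul]
    _ ≤ Metric.diam K₀ + (∑ s ∈ S, dist x₀ (s • x₀)) * D + Metric.diam K₀ := by
        gcongr
        · exact Metric.dist_le_diam_of_mem hK₀ hk hx₀
        · exact (dist_smul_smul_le_mul_wordDist hS x₀ a b).trans
            (by gcongr; exact_mod_cast hA a ha b hb)
        · exact Metric.dist_le_diam_of_mem hK₀ hx₀ hk'
    _ = _ := by ring

end OrbitMap

section ProperlyDiscontinuous

variable {X : Type*} [TopologicalSpace X] [MulAction G X] [ProperlyDiscontinuousSMul G X]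

theorem finite_setOf_exists_smul_mem {K L : Set X} (hK : IsCompact K) (hL : IsCompact L) :
    {g : G | ∃ k ∈ K, g • k ∈ L}.Finite :=
  (ProperlyDiscontinuousSMul.finite_disjoint_inter_image hK hL).subset fun g ⟨k, hk, hgk⟩ =>
    ⟨g • k, Set.mem_image_of_mem _ hk, hgk⟩

theorem exists_finite_subset_smul {K₀ L : Set X} (hK₀ : IsCompact K₀)
    (hcover : ∀ x : X, ∃ g : G, ∃ k ∈ K₀, x = g • k) (hL : IsCompact L) :
    ∃ A : Set G, A.Finite ∧ L ⊆ A • K₀ := by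
  refine ⟨_, finite_setOf_exists_smul_mem hK₀ hL, fun x hx => ?_⟩
  obtain ⟨g, k, hk, rfl⟩ := hcover x
  exact Set.smul_mem_smul ⟨k, hk, hx⟩ hk

end ProperlyDiscontinuous

theorem iterate_image_subset_iterate_smul {α β : Type*} [SMul α β] {f : β → β}
    {T : Set α → Set α} {K₀ K : Set β} {A₀ : Set α} (hT : ∀ A, f '' (A • K₀) ⊆ T A • K₀)
    (h₀ : K ⊆ A₀ • K₀) (n : ℕ) : f^[n] '' K ⊆ T^[n] A₀ • K₀ := by
  induction n with
  | zero => simpa using h₀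
  | succ n ih =>
    rw [Function.iterate_succ_apply', Function.iterate_succ', Set.image_comp]
    exact (Set.image_mono ih).trans (hT _)

theorem image_smul_subset_wordNbhd {X : Type*} [MulAction G X] {f : X → X} {φ : G → G}
    (hequiv : ∀ (g : G) (x : X), f (g • x) = φ g • f x) {S : Finset G} {K₀ : Set X} {B : Set G}
    {N : ℕ} (hB : f '' K₀ ⊆ B • K₀) (hBN : ∀ b ∈ B, wordLength S b ≤ N) (A : Set G) :
    f '' (A • K₀) ⊆ wordNbhd S N (φ '' A) • K₀ := by
  rintro _ ⟨_, ⟨a, ha, k, hk, rfl⟩, rfl⟩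
  obtain ⟨b, hb, k', hk', hfk⟩ := hB (Set.mem_image_of_mem f hk)
  refine ⟨φ a * b, ⟨φ a, Set.mem_image_of_mem φ ha, ?_⟩, k', hk', ?_⟩
  · rw [wordDist_mul_right]
    exact hBN b hb
  · simp only at hfk ⊢
    rw [hequiv, ← hfk, mul_smul]

theorem polynomial_growth_of_lift_iterates_general
    {X : Type*} [MetricSpace X] [ProperSpace X] [MulAction G X]
    (hiso : ∀ g : G, Isometry (fun x : X => g • x))
    (_hpd : ProperlyDiscontinuousSMul G X)
    (K₀ : Set X) (hK₀ : IsCompact K₀)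
    (hcocompact : ∀ x : X, ∃ (g : G) (k : X), k ∈ K₀ ∧ x = g • k)
    (S : Finset G) (hS : Subgroup.closure (S : Set G) = ⊤)
    (hpoly : ∀ (φ : G ≃* G) (N : ℕ), 1 ≤ N → ∀ A : ℕ → Set G, (A 0).Finite →
      (∀ k, A (k + 1) = wordNbhd S N (φ '' A k)) →
      ∃ C p : ℕ, ∀ k, ∀ x ∈ A k, ∀ y ∈ A k, wordDist S x y ≤ C * (k + 1) ^ p)
    (f : X ≃ₜ X) (φf : G ≃* G) (hequiv : ∀ (g : G) (x : X), f (g • x) = φf g • f x)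
    (K : Set X) (hK : Bornology.IsBounded K) :
    ∃ (C : ℝ) (p : ℕ), 0 < C ∧ ∀ n : ℕ, Metric.diam ((⇑f)^[n] '' K) ≤ C * (n + 1) ^ p := by
  have : IsIsometricSMul G X := ⟨hiso⟩
  rcases K.eq_empty_or_nonempty with rfl | ⟨y, -⟩
  · exact ⟨1, 0, one_pos, fun n => by simp⟩
  obtain ⟨-, x₀, hx₀, -⟩ := hcocompact y
  obtain ⟨A₀, hA₀, hKA₀⟩ := exists_finite_subset_smul hK₀ hcocompact hK.isCompact_closure
  obtain ⟨B, hB, hfB⟩ := exists_finite_subset_smul hK₀ hcocompact (hK₀.image f.continuous)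
  obtain ⟨N, hBN⟩ := (hB.image (wordLength S)).bddAbove
  set T : Set G → Set G := fun A => wordNbhd S (N + 1) (φf '' A)
  have hcover : ∀ n, (⇑f)^[n] '' K ⊆ T^[n] A₀ • K₀ :=
    iterate_image_subset_iterate_smul
      (image_smul_subset_wordNbhd hequiv hfB fun b hb =>
        (hBN (Set.mem_image_of_mem _ hb)).trans N.le_succ)
      (subset_closure.trans hKA₀)
  obtain ⟨C, p, hCp⟩ :=
    hpoly φf (N + 1) N.succ_pos (T^[·] A₀) hA₀ fun k => Function.iterate_succ_apply' T k A₀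
  set L := ∑ s ∈ S, dist x₀ (s • x₀)
  have hL : 0 ≤ L := Finset.sum_nonneg fun _ _ => dist_nonneg
  refine ⟨2 * Metric.diam K₀ + L * C + 1, p, by positivity, fun n =>
    Metric.diam_le_of_forall_dist_le (by positivity) fun u hu v hv => ?_⟩
  have hpow : (1 : ℝ) ≤ ((n : ℝ) + 1) ^ p := one_le_pow₀ (by linarith [n.cast_nonneg (α := ℝ)])
  calc dist u v ≤ 2 * Metric.diam K₀ + L * ↑(C * (n + 1) ^ p) :=
        dist_le_of_mem_smul_of_wordDist_le hS hK₀.isBounded hx₀ (hCp n) (hcover n hu) (hcover n hv)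
    _ ≤ (2 * Metric.diam K₀ + L * C + 1) * ((n : ℝ) + 1) ^ p := by
        push_cast
        nlinarith [Metric.diam_nonneg (s := K₀), mul_nonneg hL (C.cast_nonneg (α := ℝ))]

/-- let `G` act freely, properly discontinuously, cocompactly by isometries on a
proper geodesic metric space `M̃`. If for every automorphism `φ`, every `N ≥ 1` and every finite
`A₀`, the sequence `A_{k+1} = U_N(φ(A_k))` has polynomially growing word-metric diameter, then
for every homeomorphism `f̃` of `M̃` that is a lift of a homeomorphism of `M̃/G` (i.e. is
equivariant with respect to some automorphism of `G`) and every bounded `K ⊆ M̃`, the diameter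
of `f̃ⁿ(K)` grows at most polynomially in `n`. -/
theorem polynomial_growth_of_lift_iterates
    {X : Type*} [MetricSpace X] [ProperSpace X] [MulAction G X]
    (hgeo : ∀ x y : X, ∃ γ : ℝ → X, γ 0 = x ∧ γ (dist x y) = y ∧
      ∀ s t : ℝ, dist (γ s) (γ t) = |s - t|)
    (hiso : ∀ g : G, Isometry (fun x : X => g • x))
    (hfree : ∀ (g : G) (x : X), g • x = x → g = 1)
    (_hpd : ProperlyDiscontinuousSMul G X)
    (K₀ : Set X) (hK₀ : IsCompact K₀)
    (hcocompact : ∀ x : X, ∃ (g : G) (k : X), k ∈ K₀ ∧ x = g • k)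
    (S : Finset G) (hS : Subgroup.closure (S : Set G) = ⊤)
    (hpoly : ∀ (φ : G ≃* G) (N : ℕ), 1 ≤ N → ∀ A : ℕ → Set G, (A 0).Finite →
      (∀ k, A (k + 1) = wordNbhd S N (φ '' A k)) →
      ∃ C p : ℕ, ∀ k, ∀ x ∈ A k, ∀ y ∈ A k, wordDist S x y ≤ C * (k + 1) ^ p)
    (f : X ≃ₜ X) (φf : G ≃* G) (hequiv : ∀ (g : G) (x : X), f (g • x) = φf g • f x)
    (K : Set X) (hK : Bornology.IsBounded K) :
    ∃ (C : ℝ) (p : ℕ), 0 < C ∧ ∀ n : ℕ, Metric.diam ((⇑f)^[n] '' K) ≤ C * (n + 1) ^ p :=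
  polynomial_growth_of_lift_iterates_general hiso _hpd K₀ hK₀ hcocompact S hS hpoly f φf hequiv K hK
end

section
/- Let M be a compact metric space, M̃ its universal cover with lifted metric, and f : M → M a homeomorphism with lift f̃ : M̃ → M̃. Suppose there exists an isometry g : M → M with lift g̃ : M̃ → M̃ inducing the same automorphism of π₁(M) as f̃ (i.e., f̃ and g̃ are equivariant with respect to the same automorphism of the deck group). Then there is C > 0 such that d(f̃ⁿ(x), f̃ⁿ(y)) ≤ d(x,y) + 2Cn for all x, y ∈ M̃ and all n ≥ 1. In particular, orbit separation under f̃ grows at most linearly. -/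
/-!
The displacement `x ↦ d(f̃ x, g̃ x)` is invariant under the deck group, because `f̃` and `g̃` twist
the action by the same automorphism and deck transformations are isometries. Cocompactness makes
it bounded, say by `C`, and then `f̃` moves distances at most as much as the isometry `g̃` plus
`2C`, via the triangle inequality through `g̃ x` and `g̃ y`.
-/

open Function

section Displacement

variable {X : Type*} [MetricSpace X]

lemma bddAbove_range_of_isCompact_of_smul_invariant {G : Type*} [Group G] [MulAction G X]
    {h : X → ℝ} (hh : Continuous h) (h_inv : ∀ (γ : G) (x : X), h (γ • x) = h x)
    {K : Set X} (hK : IsCompact K) (hKcov : ∀ x : X, ∃ (γ : G) (k : X), k ∈ K ∧ x = γ • k) :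
    BddAbove (Set.range h) := by
  obtain ⟨C, hC⟩ := (hK.image hh).bddAbove
  refine ⟨C, ?_⟩
  rintro _ ⟨x, rfl⟩
  obtain ⟨γ, k, hk, rfl⟩ := hKcov x
  exact h_inv γ k ▸ hC ⟨k, hk, rfl⟩

lemma dist_apply_smul_eq_of_equivariant {G : Type*} [Group G] [MulAction G X]
    (hiso : ∀ γ : G, Isometry (fun x : X => γ • x)) {f g : X → X} (φ : G →* G)
    (hf : ∀ (γ : G) (x : X), f (γ • x) = φ γ • f x)
    (hg : ∀ (γ : G) (x : X), g (γ • x) = φ γ • g x) (γ : G) (x : X) :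
    dist (f (γ • x)) (g (γ • x)) = dist (f x) (g x) := by
  rw [hf, hg, (hiso (φ γ)).dist_eq]

variable {f g : X → X} {C : ℝ}

lemma dist_apply_le_of_dist_le_isometry (hg : Isometry g) (hfg : ∀ x, dist (f x) (g x) ≤ C)
    (x y : X) : dist (f x) (f y) ≤ dist x y + 2 * C :=
  calc dist (f x) (f y)
      ≤ dist (f x) (g x) + dist (g x) (g y) + dist (g y) (f y) := dist_triangle4 _ _ _ _
    _ ≤ C + dist x y + C := by
        gcongr
        · exact hfg x
        · exact (hg.dist_eq x y).le
        · exact dist_comm (g y) (f y) ▸ hfg y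
    _ = dist x y + 2 * C := by ring

lemma dist_iterate_le_of_dist_le_isometry (hg : Isometry g) (hfg : ∀ x, dist (f x) (g x) ≤ C)
    (n : ℕ) (x y : X) : dist (f^[n] x) (f^[n] y) ≤ dist x y + 2 * C * n := by
  induction n with
  | zero => simp
  | succ n ih =>
    rw [iterate_succ_apply', iterate_succ_apply']
    calc dist (f (f^[n] x)) (f (f^[n] y))
        ≤ dist (f^[n] x) (f^[n] y) + 2 * C := dist_apply_le_of_dist_le_isometry hg hfg _ _
      _ ≤ dist x y + 2 * C * n + 2 * C := by gcongr
      _ = dist x y + 2 * C * ↑(n + 1) := by push_cast; ring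

end Displacement

theorem linear_orbit_growth_of_isometric_model_general
    {X : Type*} [MetricSpace X] {G : Type*} [Group G] [MulAction G X]
    (hiso : ∀ g : G, Isometry (fun x : X => g • x))
    (K : Set X) (hK : IsCompact K) (hKcov : ∀ x : X, ∃ (γ : G) (k : X), k ∈ K ∧ x = γ • k)
    (ftil : X ≃ₜ X) (gtil : X → X) (hgiso : Isometry gtil)
    (φ : G ≃* G)
    (hfequiv : ∀ (γ : G) (x : X), ftil (γ • x) = φ γ • ftil x)
    (hgequiv : ∀ (γ : G) (x : X), gtil (γ • x) = φ γ • gtil x) :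
    ∃ C > 0, ∀ n : ℕ, 1 ≤ n → ∀ x y : X,
      dist ((⇑ftil)^[n] x) ((⇑ftil)^[n] y) ≤ dist x y + 2 * C * n := by
  obtain ⟨C₀, hC₀⟩ := bddAbove_range_of_isCompact_of_smul_invariant
    (ftil.continuous.dist hgiso.continuous)
    (dist_apply_smul_eq_of_equivariant hiso φ.toMonoidHom hfequiv hgequiv) hK hKcov
  have hdisp : ∀ x, dist (ftil x) (gtil x) ≤ max C₀ 1 :=
    fun x => (hC₀ ⟨x, rfl⟩).trans (le_max_left _ _)
  exact ⟨max C₀ 1, lt_max_of_lt_right one_pos, fun n _ x y =>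
    dist_iterate_le_of_dist_le_isometry hgiso hdisp n x y⟩

/-- let `M̃` be the universal cover of a compact metric space `M` (encoded by a
cocompact isometric action of the deck group `G` on `M̃`), `f̃` a lift of a homeomorphism
`f : M → M`, and `g̃` a lift of an isometry `g : M → M` inducing the same automorphism `φ`
of `π₁(M)`. Then there is `C > 0` with `d(f̃ⁿ x, f̃ⁿ y) ≤ d(x, y) + 2Cn` for all `x, y` and
`n ≥ 1`: orbit separation grows at most linearly. -/
theorem linear_orbit_growth_of_isometric_model
    {X : Type*} [MetricSpace X] {G : Type*} [Group G] [MulAction G X]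
    (hiso : ∀ g : G, Isometry (fun x : X => g • x))
    (K : Set X) (hK : IsCompact K) (hKcov : ∀ x : X, ∃ (γ : G) (k : X), k ∈ K ∧ x = γ • k)
    (ftil : X ≃ₜ X) (gtil : X → X) (hgiso : Isometry gtil) (hgsurj : Function.Surjective gtil)
    (φ : G ≃* G)
    (hfequiv : ∀ (γ : G) (x : X), ftil (γ • x) = φ γ • ftil x)
    (hgequiv : ∀ (γ : G) (x : X), gtil (γ • x) = φ γ • gtil x) :
    ∃ C > 0, ∀ n : ℕ, 1 ≤ n → ∀ x y : X,
      dist ((⇑ftil)^[n] x) ((⇑ftil)^[n] y) ≤ dist x y + 2 * C * n :=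
  linear_orbit_growth_of_isometric_model_general hiso K hK hKcov ftil gtil hgiso φ hfequiv hgequiv
end
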